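/- Let A be a C*-algebra, E a Hilbert A-module, and T : E → E adjointable with a modulus R (adjointable, R* = R, ⟨Rx,x⟩ ≥ 0 for all x, R∘R = T*∘T). Suppose moreover Q : E → E is adjointable with Q* = Q, ⟨Qx,x⟩ ≥ 0 for all x, and Q∘Q = R (so Q = |T|^{1/2}). Then π̃₂(T)² ≤ ‖T‖·π̃₁(T), i.e. ( sup{ ‖Σᵢ₌₁ⁿ ⟨Txᵢ,Txᵢ⟩‖^{1/2} : n ∈ ℕ, μₙ(x₁,…,xₙ) ≤ 1 } )² ≤ ‖T‖ · sup{ ‖Σᵢ₌₁ⁿ ⟨Rxᵢ,xᵢ⟩‖ : n ∈ ℕ, μₙ(x₁,…,xₙ) ≤ 1 }. -/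

import Mathlib

/-!
Since `R = Q²` and `T*T = R²`, we have `⟪Txᵢ, Txᵢ⟫ = ⟪Q²xᵢ, Q²xᵢ⟫`, `⟪Rxᵢ, xᵢ⟫ = ⟪Qxᵢ, Qxᵢ⟫` and
`‖Q‖² ≤ ‖R‖ = ‖T‖`, so it suffices to show `s₂ ≤ ‖Q‖² s₁` for
`sₖ = ‖∑ᵢ ⟪Qᵏxᵢ, Qᵏxᵢ⟫‖`. This is a spectral-radius argument: Cauchy–Schwarz in the
C⋆-module `Eⁿ` and self-adjointness of `Q` give `s_{m+1}² ≤ s_{2m+1} s₁`, and iterating it,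
`s₂^(2ᵏ) ≤ s₁^(2ᵏ-1) s_{2ᵏ+1} ≤ s₁^(2ᵏ-1) ‖Q‖^(2(2ᵏ+1)) ∑ᵢ ‖xᵢ‖²`; taking `2ᵏ`-th roots and letting
`k → ∞` yields the claim.
-/

open scoped InnerProductSpace RightActions ENNReal

noncomputable section

/-- The class `CStarModule` as it stood in Mathlib of December 2024 (right `A`-action). -/
class RightCStarModule (A : outParam <| Type*) (E : Type*) [NonUnitalSemiring A] [StarRing A]
    [Module ℂ A] [AddCommGroup E] [Module ℂ E] [PartialOrder A] [SMul Aᵐᵒᵖ E] [Norm A] [Norm E]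
    extends Inner A E where
  inner_add_right {x} {y} {z} : inner x (y + z) = inner x y + inner x z
  inner_self_nonneg {x} : 0 ≤ inner x x
  inner_self {x} : inner x x = 0 ↔ x = 0
  inner_op_smul_right {a : A} {x y : E} : inner x (y <• a) = inner x y * a
  inner_smul_right_complex {z : ℂ} {x} {y} : inner x (z • y) = z • inner x y
  star_inner x y : star (inner x y) = inner y x
  norm_eq_sqrt_norm_inner_self x : ‖x‖ = √‖inner x x‖

variable {A : Type*} [NonUnitalCStarAlgebra A] [PartialOrder A] [StarOrderedRing A]
variable {E : Type*} [NormedAddCommGroup E] [NormedSpace ℂ E] [SMul Aᵐᵒᵖ E]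
  [RightCStarModule A E] [CompleteSpace E]
variable {F : Type*} [NormedAddCommGroup F] [NormedSpace ℂ F] [SMul Aᵐᵒᵖ F]
  [RightCStarModule A F] [CompleteSpace F]

/-- `μₙ(x₁,…,xₙ) = sup { ‖Σᵢ ⟪xᵢ, y⟫⟪y, xᵢ⟫‖^(1/2) : y ∈ E, ‖y‖ ≤ 1 }`. -/
def mu {G : Type*} [NormedAddCommGroup G] [NormedSpace ℂ G] [SMul Aᵐᵒᵖ G]
    [RightCStarModule A G] {n : ℕ} (x : Fin n → G) : ℝ :=
  ⨆ y : {y : G // ‖y‖ ≤ 1}, Real.sqrt ‖∑ i, ⟪x i, (y : G)⟫_A * ⟪(y : G), x i⟫_A‖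

/-- `π̃₂(T) = sup { ‖Σᵢ ⟪Txᵢ, Txᵢ⟫‖^(1/2) : n ∈ ℕ, μₙ(x₁,…,xₙ) ≤ 1 }` as an element
of `[0,∞]`. -/
def piTwo {G H : Type*} [NormedAddCommGroup G] [NormedSpace ℂ G] [SMul Aᵐᵒᵖ G]
    [RightCStarModule A G] [NormedAddCommGroup H] [NormedSpace ℂ H] [SMul Aᵐᵒᵖ H]
    [RightCStarModule A H] (T : G → H) : ℝ≥0∞ :=
  ⨆ (n : ℕ) (x : Fin n → G) (_ : mu x ≤ 1),
    ENNReal.ofReal (Real.sqrt ‖∑ i, ⟪T (x i), T (x i)⟫_A‖)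

/-- Given (the underlying function of) a modulus `R = |T|` of an operator `T`,
`π̃₁(T) = sup { ‖Σᵢ ⟪Rxᵢ, xᵢ⟫‖ : n ∈ ℕ, μₙ(x₁,…,xₙ) ≤ 1 }` as an element of `[0,∞]`. -/
def piOne {G : Type*} [NormedAddCommGroup G] [NormedSpace ℂ G] [SMul Aᵐᵒᵖ G]
    [RightCStarModule A G] (R : G → G) : ℝ≥0∞ :=
  ⨆ (n : ℕ) (x : Fin n → G) (_ : mu x ≤ 1),
    ENNReal.ofReal ‖∑ i, ⟪R (x i), x i⟫_A‖


theorem le_of_frequently_pow_le_mul_pow {a b K : ℝ} (hb : 0 ≤ b)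
    (h : ∃ᶠ n in Filter.atTop, a ^ n ≤ K * b ^ n) : a ≤ b := by
  by_contra! hba
  have ha : 0 < a := hb.trans_lt hba
  have hlim : Filter.Tendsto (fun n : ℕ => K * (b / a) ^ n) Filter.atTop (nhds 0) := by
    simpa using (tendsto_pow_atTop_nhds_zero_of_lt_one (div_nonneg hb ha.le)
      ((div_lt_one ha).2 hba)).const_mul K
  obtain ⟨n, hn, hsmall⟩ := (h.and_eventually (hlim.eventually (gt_mem_nhds one_pos))).exists
  rw [div_pow, mul_div_assoc', div_lt_one (pow_pos ha n)] at hsmall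
  exact hn.not_gt hsmall

theorem pow_two_pow_le_of_sq_le {s : ℕ → ℝ} (hs : ∀ m, 0 ≤ s m)
    (hrec : ∀ m, s (m + 1) ^ 2 ≤ s (2 * m + 1) * s 1) (k : ℕ) :
    s 2 ^ 2 ^ k ≤ s 1 ^ (2 ^ k - 1) * s (2 ^ k + 1) := by
  induction k with
  | zero => simp
  | succ k ih =>
    have hk : 2 ^ (k + 1) = 2 * 2 ^ k := pow_succ' 2 k
    have hk1 : 1 ≤ 2 ^ k := Nat.one_le_two_pow
    calc s 2 ^ 2 ^ (k + 1) = (s 2 ^ 2 ^ k) ^ 2 := by rw [hk, pow_mul']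
      _ ≤ (s 1 ^ (2 ^ k - 1) * s (2 ^ k + 1)) ^ 2 := by gcongr; exact pow_nonneg (hs 2) _
      _ ≤ (s 1 ^ (2 ^ k - 1)) ^ 2 * (s (2 * 2 ^ k + 1) * s 1) := by
        rw [mul_pow]; gcongr; exact hrec _
      _ = s 1 ^ (2 ^ (k + 1) - 1) * s (2 ^ (k + 1) + 1) := by
        rw [hk, show 2 * 2 ^ k - 1 = (2 ^ k - 1) * 2 + 1 by omega, pow_succ (s 1), pow_mul]
        ring

theorem le_mul_of_sq_le_mul_of_le_mul_pow {s : ℕ → ℝ} {C q : ℝ} (hs : ∀ m, 0 ≤ s m)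
    (hq : 0 ≤ q) (hrec : ∀ m, s (m + 1) ^ 2 ≤ s (2 * m + 1) * s 1)
    (hbound : ∀ m, s m ≤ C * q ^ m) :
    s 2 ≤ q * s 1 := by
  refine le_of_frequently_pow_le_mul_pow (K := C * q / s 1) (mul_nonneg hq (hs 1)) ?_
  refine Filter.frequently_atTop.2 fun n => ⟨2 ^ (n + 1), Nat.lt_two_pow_self.le.trans ?_, ?_⟩
  · exact Nat.pow_le_pow_right two_pos n.le_succ
  obtain ⟨N, hN⟩ : ∃ N, 2 ^ (n + 1) = N + 2 := ⟨2 ^ (n + 1) - 2, by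
    have : 2 ≤ 2 ^ (n + 1) := Nat.le_self_pow n.succ_ne_zero 2
    omega⟩
  calc s 2 ^ 2 ^ (n + 1) ≤ s 1 ^ (2 ^ (n + 1) - 1) * s (2 ^ (n + 1) + 1) :=
        pow_two_pow_le_of_sq_le hs hrec _
    _ ≤ s 1 ^ (2 ^ (n + 1) - 1) * (C * q ^ (2 ^ (n + 1) + 1)) := by
        gcongr
        · exact pow_nonneg (hs 1) _
        · exact hbound _
    _ = C * q / s 1 * (q * s 1) ^ 2 ^ (n + 1) := by
        rw [hN, show N + 2 - 1 = N + 1 by omega]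
        rcases (hs 1).eq_or_lt with h1 | h1
        · -- both sides vanish, the right one because `C * q / 0 = 0`
          simp [← h1]
        · field_simp
          ring

theorem ContinuousLinearMap.opNorm_pow_le {𝕜 V : Type*} [NontriviallyNormedField 𝕜]
    [SeminormedAddCommGroup V] [NormedSpace 𝕜 V] (f : V →L[𝕜] V) (n : ℕ) :
    ‖f ^ n‖ ≤ ‖f‖ ^ n := by
  rcases n.eq_zero_or_pos with rfl | hn
  · exact (pow_zero f).symm ▸ ContinuousLinearMap.norm_id_le
  · exact norm_pow_le' f hn

section

variable {B : Type*} [NonUnitalCStarAlgebra B] [PartialOrder B]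

namespace RightCStarModule

variable {M : Type*} [NormedAddCommGroup M] [NormedSpace ℂ M] [SMul Bᵐᵒᵖ M] [RightCStarModule B M]

instance toCStarModuleMulOpposite : CStarModule Bᵐᵒᵖ M where
  inner x y := MulOpposite.op ⟪x, y⟫_B
  inner_add_right := by
    intro x y z
    rw [RightCStarModule.inner_add_right, MulOpposite.op_add]
  inner_self_nonneg := RightCStarModule.inner_self_nonneg
  inner_self := MulOpposite.op_eq_zero_iff _ |>.trans RightCStarModule.inner_self
  inner_op_smul_right {a x y} := by
    change MulOpposite.op ⟪x, y <• a.unop⟫_B = _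
    rw [RightCStarModule.inner_op_smul_right, MulOpposite.op_mul, MulOpposite.op_unop]
  inner_smul_right_complex := by
    intro z x y
    rw [RightCStarModule.inner_smul_right_complex, MulOpposite.op_smul]
  star_inner x y := by
    rw [← MulOpposite.op_star, RightCStarModule.star_inner]
  norm_eq_sqrt_norm_inner_self x := by
    rw [MulOpposite.norm_op]
    exact RightCStarModule.norm_eq_sqrt_norm_inner_self x

theorem norm_sq_eq (x : M) : ‖x‖ ^ 2 = ‖⟪x, x⟫_B‖ := by
  rw [norm_eq_sqrt_norm_inner_self (A := B) x, Real.sq_sqrt (norm_nonneg _)]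

theorem norm_inner_le [StarOrderedRing B] (x y : M) : ‖⟪x, y⟫_B‖ ≤ ‖x‖ * ‖y‖ := by
  rw [← MulOpposite.norm_op]
  exact CStarModule.norm_inner_le M (A := Bᵐᵒᵖ)

open WithCStarModule in
theorem norm_sum_inner_sq_le [StarOrderedRing B] {n : ℕ} (u v : Fin n → M) :
    ‖∑ i, ⟪u i, v i⟫_B‖ ^ 2 ≤ ‖∑ i, ⟪u i, u i⟫_B‖ * ‖∑ i, ⟪v i, v i⟫_B‖ := by
  let U : C⋆ᵐᵒᵈ(Bᵐᵒᵖ, Fin n → M) := (WithCStarModule.equiv _ _).symm u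
  let V : C⋆ᵐᵒᵈ(Bᵐᵒᵖ, Fin n → M) := (WithCStarModule.equiv _ _).symm v
  have hnorm (w : Fin n → M) :
      ‖(WithCStarModule.equiv Bᵐᵒᵖ _).symm w‖ ^ 2 = ‖∑ i, ⟪w i, w i⟫_B‖ := by
    rw [pi_norm_sq, ← MulOpposite.norm_op (∑ i, ⟪w i, w i⟫_B), Finset.op_sum]
    rfl
  have hUV : ⟪U, V⟫_(Bᵐᵒᵖ) = MulOpposite.op (∑ i, ⟪u i, v i⟫_B) := by
    rw [pi_inner, Finset.op_sum]
    rfl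
  calc ‖∑ i, ⟪u i, v i⟫_B‖ ^ 2 = ‖⟪U, V⟫_(Bᵐᵒᵖ)‖ ^ 2 := by rw [hUV, MulOpposite.norm_op]
    _ ≤ (‖U‖ * ‖V‖) ^ 2 := by gcongr; exact CStarModule.norm_inner_le _
    _ = _ := by rw [mul_pow, hnorm, hnorm]

theorem norm_sum_inner_self_apply_le {n : ℕ} (S : M →L[ℂ] M) (x : Fin n → M) :
    ‖∑ i, ⟪S (x i), S (x i)⟫_B‖ ≤ ‖S‖ ^ 2 * ∑ i, ‖x i‖ ^ 2 := by
  calc ‖∑ i, ⟪S (x i), S (x i)⟫_B‖ ≤ ∑ i, ‖S (x i)‖ ^ 2 := by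
        simpa only [norm_sq_eq] using norm_sum_le _ _
    _ ≤ ∑ i, (‖S‖ * ‖x i‖) ^ 2 := by gcongr; exact S.le_opNorm _
    _ = ‖S‖ ^ 2 * ∑ i, ‖x i‖ ^ 2 := by simp only [mul_pow, Finset.mul_sum]

theorem inner_pow_apply_left {Q : M →L[ℂ] M} (hQ : ∀ x y : M, ⟪Q x, y⟫_B = ⟪x, Q y⟫_B)
    (m : ℕ) (x y : M) : ⟪(Q ^ m) x, y⟫_B = ⟪x, (Q ^ m) y⟫_B := by
  induction m generalizing x with
  | zero => rfl
  | succ m ih =>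
    rw [pow_succ, mul_apply_eq_comp, ih, hQ, ← mul_apply_eq_comp, ← pow_succ', pow_succ]

theorem norm_sum_inner_pow_succ_sq_le [StarOrderedRing B] {Q : M →L[ℂ] M}
    (hQ : ∀ x y : M, ⟪Q x, y⟫_B = ⟪x, Q y⟫_B) {n : ℕ} (x : Fin n → M) (m : ℕ) :
    ‖∑ i, ⟪(Q ^ (m + 1)) (x i), (Q ^ (m + 1)) (x i)⟫_B‖ ^ 2 ≤
      ‖∑ i, ⟪(Q ^ (2 * m + 1)) (x i), (Q ^ (2 * m + 1)) (x i)⟫_B‖ *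
        ‖∑ i, ⟪(Q ^ 1) (x i), (Q ^ 1) (x i)⟫_B‖ := by
  have hsplit (y : M) :
      ⟪(Q ^ (2 * m + 1)) y, (Q ^ 1) y⟫_B = ⟪(Q ^ (m + 1)) y, (Q ^ (m + 1)) y⟫_B := by
    rw [show 2 * m + 1 = m + (m + 1) by ring, pow_add Q m (m + 1), mul_apply_eq_comp,
      inner_pow_apply_left hQ m, ← mul_apply_eq_comp, ← pow_add]
  simp only [← hsplit]
  exact norm_sum_inner_sq_le _ _

theorem norm_sum_inner_apply_apply_le [StarOrderedRing B] {Q : M →L[ℂ] M}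
    (hQ : ∀ x y : M, ⟪Q x, y⟫_B = ⟪x, Q y⟫_B) {n : ℕ} (x : Fin n → M) :
    ‖∑ i, ⟪Q (Q (x i)), Q (Q (x i))⟫_B‖ ≤ ‖Q‖ ^ 2 * ‖∑ i, ⟪Q (x i), Q (x i)⟫_B‖ := by
  have hbound (m : ℕ) : ‖∑ i, ⟪(Q ^ m) (x i), (Q ^ m) (x i)⟫_B‖ ≤
      (∑ i, ‖x i‖ ^ 2) * (‖Q‖ ^ 2) ^ m := by
    refine (norm_sum_inner_self_apply_le (Q ^ m) x).trans ?_
    rw [mul_comm, ← pow_right_comm]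
    gcongr
    exact Q.opNorm_pow_le m
  simpa only [pow_two, pow_one, mul_apply_eq_comp] using
    le_mul_of_sq_le_mul_of_le_mul_pow (fun _ => norm_nonneg _) (by positivity)
      (norm_sum_inner_pow_succ_sq_le hQ x) hbound

theorem opNorm_sq_le_opNorm_comp_self [StarOrderedRing B] {Q : M →L[ℂ] M}
    (hQ : ∀ x y : M, ⟪Q x, y⟫_B = ⟪x, Q y⟫_B) : ‖Q‖ ^ 2 ≤ ‖Q.comp Q‖ := by
  have hbound (z : M) : ‖Q z‖ ≤ √‖Q.comp Q‖ * ‖z‖ := by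
    rw [← Real.sqrt_sq (norm_nonneg z), ← Real.sqrt_mul (norm_nonneg _),
      Real.le_sqrt (norm_nonneg _) (by positivity), norm_sq_eq, ← hQ]
    calc ‖⟪Q (Q z), z⟫_B‖ ≤ ‖Q (Q z)‖ * ‖z‖ := norm_inner_le _ _
      _ ≤ ‖Q.comp Q‖ * ‖z‖ * ‖z‖ := by gcongr; exact (Q.comp Q).le_opNorm z
      _ = ‖Q.comp Q‖ * ‖z‖ ^ 2 := by ring
  exact (Real.le_sqrt (norm_nonneg _) (norm_nonneg _)).1 <|
    Q.opNorm_le_bound (Real.sqrt_nonneg _) hbound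

theorem inner_self_apply_eq_of_comp_self_eq {T T' R : M →L[ℂ] M}
    (hT : ∀ x y : M, ⟪T x, y⟫_B = ⟪x, T' y⟫_B) (hR : ∀ x y : M, ⟪R x, y⟫_B = ⟪x, R y⟫_B)
    (hRR : R.comp R = T'.comp T) (z : M) : ⟪T z, T z⟫_B = ⟪R z, R z⟫_B := by
  rw [hT, hR, ← ContinuousLinearMap.comp_apply T' T, ← hRR, ContinuousLinearMap.comp_apply]

theorem opNorm_eq_of_comp_self_eq {T T' R : M →L[ℂ] M}
    (hT : ∀ x y : M, ⟪T x, y⟫_B = ⟪x, T' y⟫_B) (hR : ∀ x y : M, ⟪R x, y⟫_B = ⟪x, R y⟫_B)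
    (hRR : R.comp R = T'.comp T) : ‖R‖ = ‖T‖ :=
  ContinuousLinearMap.opNorm_ext R T fun z => by
    rw [← sq_eq_sq₀ (norm_nonneg _) (norm_nonneg _), norm_sq_eq (B := B), norm_sq_eq (B := B),
      inner_self_apply_eq_of_comp_self_eq hT hR hRR]

end RightCStarModule

theorem piTwo_sq_le_ofReal_mul_piOne {G H : Type*} [NormedAddCommGroup G] [NormedSpace ℂ G]
    [SMul Bᵐᵒᵖ G] [RightCStarModule B G] [NormedAddCommGroup H] [NormedSpace ℂ H]
    [SMul Bᵐᵒᵖ H] [RightCStarModule B H] {T : G → H} {R : G → G} {c : ℝ}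
    (h : ∀ (n : ℕ) (x : Fin n → G), mu x ≤ 1 →
      ‖∑ i, ⟪T (x i), T (x i)⟫_B‖ ≤ c * ‖∑ i, ⟪R (x i), x i⟫_B‖) :
    piTwo T ^ 2 ≤ ENNReal.ofReal c * piOne R := by
  simp only [piTwo, ENNReal.iSup_pow_of_ne_zero two_ne_zero]
  refine iSup₂_le fun n x => iSup_le fun hx => ?_
  rw [← ENNReal.ofReal_pow (Real.sqrt_nonneg _), Real.sq_sqrt (norm_nonneg _)]
  calc ENNReal.ofReal ‖∑ i, ⟪T (x i), T (x i)⟫_B‖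
      ≤ ENNReal.ofReal (c * ‖∑ i, ⟪R (x i), x i⟫_B‖) := ENNReal.ofReal_le_ofReal (h n x hx)
    _ = ENNReal.ofReal c * ENNReal.ofReal ‖∑ i, ⟪R (x i), x i⟫_B‖ :=
      ENNReal.ofReal_mul' (norm_nonneg _)
    _ ≤ ENNReal.ofReal c * piOne R := by
      gcongr
      exact le_iSup₂_of_le n x (le_iSup_of_le hx le_rfl)

end

open RightCStarModule

theorem piTwo_sq_le_norm_mul_piOne_general (T : E →L[ℂ] E) (T' : E →L[ℂ] E)
    (hT : ∀ (x y : E), ⟪T x, y⟫_A = ⟪x, T' y⟫_A)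
    (R : E →L[ℂ] E)
    (hRsa : ∀ (x y : E), ⟪R x, y⟫_A = ⟪x, R y⟫_A)
    (hRR : R.comp R = T'.comp T)
    (Q : E →L[ℂ] E)
    (hQsa : ∀ (x y : E), ⟪Q x, y⟫_A = ⟪x, Q y⟫_A)
    (hQQ : Q.comp Q = R) :
    (piTwo (⇑T)) ^ 2 ≤ ENNReal.ofReal ‖T‖ * piOne (⇑R) := by
  have hRQ (z : E) : R z = Q (Q z) := by rw [← hQQ, ContinuousLinearMap.comp_apply]
  have hQT : ‖Q‖ ^ 2 ≤ ‖T‖ := by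
    rw [← opNorm_eq_of_comp_self_eq hT hRsa hRR, ← hQQ]
    exact opNorm_sq_le_opNorm_comp_self hQsa
  refine piTwo_sq_le_ofReal_mul_piOne fun n x _ => ?_
  have hR (i : Fin n) : ⟪R (x i), x i⟫_A = ⟪Q (x i), Q (x i)⟫_A := by rw [hRQ, hQsa]
  calc ‖∑ i, ⟪T (x i), T (x i)⟫_A‖ = ‖∑ i, ⟪Q (Q (x i)), Q (Q (x i))⟫_A‖ := by
        simp only [inner_self_apply_eq_of_comp_self_eq hT hRsa hRR, hRQ]
    _ ≤ ‖Q‖ ^ 2 * ‖∑ i, ⟪Q (x i), Q (x i)⟫_A‖ := norm_sum_inner_apply_apply_le hQsa x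
    _ ≤ ‖T‖ * ‖∑ i, ⟪R (x i), x i⟫_A‖ := by simp only [hR]; gcongr

/-- If `T : E → E` is adjointable with modulus `R = |T|`, which itself has a positive
self-adjoint square root `Q = |T|^(1/2)`, then `π̃₂(T)² ≤ ‖T‖·π̃₁(T)`. -/
theorem piTwo_sq_le_norm_mul_piOne (T : E →L[ℂ] E) (T' : E →L[ℂ] E)
    (hT : ∀ (x y : E), ⟪T x, y⟫_A = ⟪x, T' y⟫_A)
    (R : E →L[ℂ] E)
    (hRsa : ∀ (x y : E), ⟪R x, y⟫_A = ⟪x, R y⟫_A)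
    (hRpos : ∀ x : E, 0 ≤ ⟪R x, x⟫_A)
    (hRR : R.comp R = T'.comp T)
    (Q : E →L[ℂ] E)
    (hQsa : ∀ (x y : E), ⟪Q x, y⟫_A = ⟪x, Q y⟫_A)
    (hQpos : ∀ x : E, 0 ≤ ⟪Q x, x⟫_A)
    (hQQ : Q.comp Q = R) :
    (piTwo (⇑T)) ^ 2 ≤ ENNReal.ofReal ‖T‖ * piOne (⇑R) :=
  piTwo_sq_le_norm_mul_piOne_general T T' hT R hRsa hRR Q hQsa hQQ
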